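/- (Generic case; original Formula 8.5.) Let X = (a_1, ..., a_m) be a finite list of nonzero vectors spanning ℂ^n and μ : {1,...,m} → ℂ. Define X_p := { i : ⟨a_i | p⟩ + μ_i = 0 } and P(X,μ) := { p ∈ ℂ^n : {a_i : i ∈ X_p} spans ℂ^n }. Assume the data are generic, i.e. for every p ∈ P(X,μ) the vectors {a_i : i ∈ X_p} are linearly independent (hence form a basis of ℂ^n). Then in the field K = ℂ(x_1,...,x_n) one has the identity ∏_{i=1}^m 1/(a_i + μ_i) = Σ_{p ∈ P(X,μ)} ( ∏_{i ∉ X_p} 1/(⟨a_i | p⟩ + μ_i) ) · ∏_{i ∈ X_p} 1/(a_i + μ_i). -/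

import Mathlib

open MvPolynomial

/-- The linear polynomial `∑ j, a j * x j ∈ ℂ[x_1, …, x_n]` attached to a vector `a ∈ ℂ^n`. -/
noncomputable def linForm {n : ℕ} (a : Fin n → ℂ) : MvPolynomial (Fin n) ℂ :=
  ∑ j, C (a j) * X j

/-- The element `a i + μ i` of the rational function field `K = ℂ(x_1, …, x_n)`. -/
noncomputable def affForm {n m : ℕ} (a : Fin m → (Fin n → ℂ)) (μ : Fin m → ℂ) (i : Fin m) :
    FractionRing (MvPolynomial (Fin n) ℂ) :=
  algebraMap (MvPolynomial (Fin n) ℂ) (FractionRing (MvPolynomial (Fin n) ℂ))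
    (linForm (a i) + C (μ i))

/-- `X_p`: the set of indices `i` such that `⟨a i | p⟩ + μ i = 0`. -/
def Xp {n m : ℕ} (a : Fin m → (Fin n → ℂ)) (μ : Fin m → ℂ) (p : Fin n → ℂ) : Set (Fin m) :=
  {i | (∑ j, a i j * p j) + μ i = 0}

/-- `X_p` as a finite set of indices. -/
noncomputable def XpFinset {n m : ℕ} (a : Fin m → (Fin n → ℂ)) (μ : Fin m → ℂ)
    (p : Fin n → ℂ) : Finset (Fin m) :=
  (Set.toFinite (Xp a μ p)).toFinset

/-- `P(X, μ)`: the points of the arrangement, i.e. the points `p` such that the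
vectors `{a i : i ∈ X_p}` span `ℂ^n`. -/
def armPoints {n m : ℕ} (a : Fin m → (Fin n → ℂ)) (μ : Fin m → ℂ) : Set (Fin n → ℂ) :=
  {p | Submodule.span ℂ (a '' Xp a μ p) = ⊤}

/-!
Induction on the set `s` of indices. If the affine forms `aᵢ + μᵢ`, `i ∈ s`, have a common zero
`p`, then `p` is the only point and the identity is trivial. Otherwise, by the Fredholm
alternative, there is a relation `∑ cᵢ aᵢ = 0` with `∑ cᵢ μᵢ = 1`, i.e. `∑ cᵢ (aᵢ + μᵢ) = 1`, so
`∏ 1/(aᵢ + μᵢ) = ∑ cᵢ ∏_{j ≠ i} 1/(aⱼ + μⱼ)`. Deleting an index `i` with `cᵢ ≠ 0` keeps the `aⱼ`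
spanning, and by genericity the points of the smaller arrangement are exactly the points `p` of
the original one with `i ∉ X_p`. After applying induction, the terms at a point `p` recombine by
the same partial-fraction identity, now in `ℂ` for the numbers `⟨aᵢ | p⟩ + μᵢ`, `i ∉ X_p`,
which satisfy `∑ cᵢ (⟨aᵢ | p⟩ + μᵢ) = 1`.
-/

open Finset

section DotProduct

variable {𝕜 κ ι : Type*} [Field 𝕜] [Fintype κ]

theorem eq_of_forall_dotProduct_eq {S : Set (κ → 𝕜)} (hS : Submodule.span 𝕜 S = ⊤)
    {p q : κ → 𝕜} (h : ∀ v ∈ S, v ⬝ᵥ p = v ⬝ᵥ q) : p = q := by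
  classical
  refine (dotProductEquiv 𝕜 κ).injective (LinearMap.ext_on hS fun v hv => ?_)
  simpa [dotProduct_comm] using h v hv

/-- Fredholm alternative for the affine equations `a i ⬝ᵥ p + μ i = 0`, `i ∈ s`. -/
theorem exists_common_zero_or_exists_relation (s : Finset ι) (a : ι → κ → 𝕜) (μ : ι → 𝕜) :
    (∃ p, ∀ i ∈ s, a i ⬝ᵥ p + μ i = 0) ∨
      ∃ c : ι → 𝕜, ∑ i ∈ s, c i • a i = 0 ∧ ∑ i ∈ s, c i * μ i = 1 := by
  classical
  refine or_iff_not_imp_right.mpr fun h => ?_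
  let f : (ι → 𝕜) →ₗ[𝕜] κ → 𝕜 := ∑ i ∈ s, (LinearMap.proj i).smulRight (a i)
  let l : Module.Dual 𝕜 (ι → 𝕜) := ∑ i ∈ s, μ i • LinearMap.proj i
  have hf (c : ι → 𝕜) : f c = ∑ i ∈ s, c i • a i := by simp [f]
  have hl (c : ι → 𝕜) : l c = ∑ i ∈ s, c i * μ i := by simp [l, mul_comm]
  -- `l` kills every relation of `a`, hence factors through `f`
  have hl_mem : l ∈ (LinearMap.ker f).dualAnnihilator := by
    refine (Submodule.mem_dualAnnihilator _).mpr fun c hc => by_contra fun hlc => h ?_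
    rw [LinearMap.mem_ker, hf] at hc
    rw [hl] at hlc
    refine ⟨(∑ i ∈ s, c i * μ i)⁻¹ • c, ?_, ?_⟩
    · simp only [Pi.smul_apply, smul_eq_mul, mul_smul, ← smul_sum, hc, smul_zero]
    · simp [mul_assoc, ← mul_sum, inv_mul_cancel₀ hlc]
  rw [← LinearMap.range_dualMap_eq_dualAnnihilator_ker] at hl_mem
  obtain ⟨φ, hφ⟩ := hl_mem
  refine ⟨(dotProductEquiv 𝕜 κ).symm (-φ), fun i hi => ?_⟩
  have hφa : φ (a i) = μ i := by
    simpa [hf, hl, Pi.single_apply, hi] using LinearMap.congr_fun hφ (Pi.single i 1)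
  have hp := LinearMap.congr_fun ((dotProductEquiv 𝕜 κ).apply_symm_apply (-φ)) (a i)
  rw [dotProductEquiv_apply_apply, dotProduct_comm] at hp
  rw [hp, LinearMap.neg_apply, hφa, neg_add_cancel]

end DotProduct

theorem span_image_erase_eq_of_sum_smul_eq_zero {𝕜 M ι : Type*} [DivisionRing 𝕜] [AddCommGroup M]
    [Module 𝕜 M] [DecidableEq ι] {v : ι → M} {s : Finset ι} {c : ι → 𝕜}
    (hrel : ∑ j ∈ s, c j • v j = 0) {i : ι} (hi : i ∈ s) (hci : c i ≠ 0) :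
    Submodule.span 𝕜 (v '' ↑(s.erase i)) = Submodule.span 𝕜 (v '' s) := by
  have hvi : c i • v i = -∑ j ∈ s.erase i, c j • v j :=
    eq_neg_of_add_eq_zero_left ((add_sum_erase s _ hi).trans hrel)
  have hmem : v i ∈ Submodule.span 𝕜 (v '' ↑(s.erase i)) := by
    rw [← inv_smul_smul₀ hci (v i), hvi]
    exact Submodule.smul_mem _ _ <| Submodule.neg_mem _ <| Submodule.sum_mem _ fun j hj =>
      Submodule.smul_mem _ _ <| Submodule.subset_span ⟨j, hj, rfl⟩
  conv_rhs =>
    rw [← insert_erase hi, coe_insert, Set.image_insert_eq, Submodule.span_insert_eq_span hmem]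

theorem prod_inv_eq_sum_mul_prod_erase_inv {F ι : Type*} [Field F] [DecidableEq ι]
    (s : Finset ι) {c u : ι → F} (hu : ∀ i ∈ s, u i ≠ 0) (h : ∑ i ∈ s, c i * u i = 1) :
    ∏ i ∈ s, (u i)⁻¹ = ∑ i ∈ s, c i * ∏ j ∈ s.erase i, (u j)⁻¹ := by
  calc ∏ i ∈ s, (u i)⁻¹ = ∑ i ∈ s, c i * u i * ∏ j ∈ s, (u j)⁻¹ := by
        rw [← sum_mul, h, one_mul]
    _ = ∑ i ∈ s, c i * ∏ j ∈ s.erase i, (u j)⁻¹ := by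
        refine sum_congr rfl fun i hi => ?_
        rw [← mul_prod_erase s _ hi, mul_assoc, mul_inv_cancel_left₀ (hu i hi)]

theorem linForm_eq_linearCombination {n : ℕ} (a : Fin n → ℂ) :
    linForm a = Fintype.linearCombination ℂ X a := by
  simp [linForm, Fintype.linearCombination_apply, smul_eq_C_mul]

theorem linForm_add_C_ne_zero {n : ℕ} {a : Fin n → ℂ} (ha : a ≠ 0) (z : ℂ) :
    linForm a + C z ≠ 0 := by
  obtain ⟨j, hj⟩ := Function.ne_iff.mp ha
  intro h
  have hcoeff := congrArg (coeff (Finsupp.single j 1)) h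
  simp [linForm, coeff_sum, coeff_C_mul, coeff_X, coeff_C, Finsupp.single_left_inj one_ne_zero,
    eq_comm (a := (0 : Fin n →₀ ℕ))] at hcoeff
  exact hj hcoeff

theorem affForm_ne_zero {n m : ℕ} {a : Fin m → Fin n → ℂ} (μ : Fin m → ℂ) {i : Fin m}
    (ha : a i ≠ 0) : affForm a μ i ≠ 0 :=
  (map_ne_zero_iff _ (IsFractionRing.injective _ _)).mpr (linForm_add_C_ne_zero ha (μ i))

theorem sum_mul_affForm_eq_one {n m : ℕ} {a : Fin m → Fin n → ℂ} {μ : Fin m → ℂ}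
    {s : Finset (Fin m)} {c : Fin m → ℂ} (hrel : ∑ i ∈ s, c i • a i = 0)
    (hμ : ∑ i ∈ s, c i * μ i = 1) :
    ∑ i ∈ s, algebraMap ℂ (FractionRing (MvPolynomial (Fin n) ℂ)) (c i) * affForm a μ i = 1 := by
  have hpoly : ∑ i ∈ s, C (c i) * (linForm (a i) + C (μ i)) = (1 : MvPolynomial (Fin n) ℂ) :=
    calc ∑ i ∈ s, C (c i) * (linForm (a i) + C (μ i))
        = linForm (∑ i ∈ s, c i • a i) + C (∑ i ∈ s, c i * μ i) := by
          simp only [mul_add, sum_add_distrib, linForm_eq_linearCombination, map_sum, map_smul,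
            smul_eq_C_mul, map_mul]
      _ = 1 := by rw [hrel, hμ, linForm_eq_linearCombination, map_zero, map_one, zero_add]
  simp only [affForm, IsScalarTower.algebraMap_apply ℂ (MvPolynomial (Fin n) ℂ), algebraMap_eq,
    ← map_mul, ← map_sum, hpoly, map_one]

section Arrangement

variable {n m : ℕ} (a : Fin m → Fin n → ℂ) (μ : Fin m → ℂ)

/-- `P(X, μ)` for the subfamily `(a i)_{i ∈ s}`. -/
def armPointsOn (s : Finset (Fin m)) : Set (Fin n → ℂ) :=
  {p | Submodule.span ℂ (a '' ↑(s ∩ XpFinset a μ p)) = ⊤}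

def IsGenericOn (s : Finset (Fin m)) : Prop :=
  ∀ p ∈ armPointsOn a μ s, LinearIndepOn ℂ a ↑(s ∩ XpFinset a μ p)

noncomputable def pointTerm (s : Finset (Fin m)) (p : Fin n → ℂ) :
    FractionRing (MvPolynomial (Fin n) ℂ) :=
  algebraMap ℂ _ (∏ i ∈ s \ XpFinset a μ p, (a i ⬝ᵥ p + μ i)⁻¹) *
    ∏ i ∈ s ∩ XpFinset a μ p, (affForm a μ i)⁻¹

variable {a μ}

@[simp]
theorem coe_XpFinset (p : Fin n → ℂ) : (XpFinset a μ p : Set (Fin m)) = Xp a μ p :=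
  Set.Finite.coe_toFinset _

theorem mem_XpFinset {p : Fin n → ℂ} {i : Fin m} :
    i ∈ XpFinset a μ p ↔ a i ⬝ᵥ p + μ i = 0 :=
  Set.Finite.mem_toFinset _

theorem armPointsOn_univ : armPointsOn a μ univ = armPoints a μ := by
  simp [armPointsOn, armPoints]

theorem isGenericOn_univ_iff :
    IsGenericOn a μ univ ↔ ∀ p ∈ armPoints a μ, LinearIndepOn ℂ a (Xp a μ p) := by
  simp [IsGenericOn, armPointsOn_univ]

theorem armPointsOn_mono {s t : Finset (Fin m)} (h : t ⊆ s) :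
    armPointsOn a μ t ⊆ armPointsOn a μ s := fun _ hp =>
  top_unique <| hp.symm.trans_le <| Submodule.span_mono <| Set.image_mono <|
    coe_subset.mpr <| inter_subset_inter_right h

theorem IsGenericOn.mono {s t : Finset (Fin m)} (hgen : IsGenericOn a μ s) (h : t ⊆ s) :
    IsGenericOn a μ t := fun p hp =>
  (hgen p (armPointsOn_mono h hp)).mono <| coe_subset.mpr <| inter_subset_inter_right h

theorem eq_of_mem_armPointsOn {s : Finset (Fin m)} {p q : Fin n → ℂ}
    (hp : p ∈ armPointsOn a μ s) (hq : ∀ i ∈ s ∩ XpFinset a μ p, a i ⬝ᵥ q + μ i = 0) : p = q := by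
  refine eq_of_forall_dotProduct_eq hp ?_
  rintro _ ⟨i, hi, rfl⟩
  have hpi := (mem_inter.mp hi).2
  rw [mem_XpFinset] at hpi
  linear_combination hpi - hq i hi

theorem armPointsOn_finite (s : Finset (Fin m)) : (armPointsOn a μ s).Finite := by
  refine Set.Finite.of_finite_image (f := fun p => s ∩ XpFinset a μ p) (Set.toFinite _) ?_
  intro p hp q _ hpq
  refine eq_of_mem_armPointsOn hp fun i hi => ?_
  rw [show s ∩ XpFinset a μ p = s ∩ XpFinset a μ q from hpq] at hi
  exact mem_XpFinset.mp (mem_inter.mp hi).2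

theorem armPointsOn_eq_singleton {s : Finset (Fin m)} (hs : Submodule.span ℂ (a '' s) = ⊤)
    {p : Fin n → ℂ} (hp : ∀ i ∈ s, a i ⬝ᵥ p + μ i = 0) : armPointsOn a μ s = {p} := by
  have hsub : s ⊆ XpFinset a μ p := fun i hi => mem_XpFinset.mpr (hp i hi)
  have hmem : p ∈ armPointsOn a μ s := by
    rwa [armPointsOn, Set.mem_ofPred_eq, inter_eq_left.mpr hsub]
  refine Set.eq_singleton_iff_unique_mem.mpr ⟨hmem, fun q hq => ?_⟩
  exact eq_of_mem_armPointsOn hq fun i hi => hp i (mem_inter.mp hi).1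

theorem mem_armPointsOn_erase {s : Finset (Fin m)} (hgen : IsGenericOn a μ s) {i : Fin m}
    (hi : i ∈ s) {p : Fin n → ℂ} :
    p ∈ armPointsOn a μ (s.erase i) ↔ p ∈ armPointsOn a μ s ∧ i ∉ XpFinset a μ p := by
  refine ⟨fun hp => ⟨armPointsOn_mono (erase_subset i s) hp, fun hip => ?_⟩, fun ⟨hp, hip⟩ => ?_⟩
  · have hspan : a i ∉ Submodule.span ℂ (a '' (↑(s ∩ XpFinset a μ p) \ {i})) :=
      (hgen p (armPointsOn_mono (erase_subset i s) hp)).notMem_span (mem_inter.mpr ⟨hi, hip⟩)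
    rw [← coe_erase, ← erase_inter] at hspan
    exact hspan (hp.symm ▸ Submodule.mem_top)
  · rwa [armPointsOn, Set.mem_ofPred_eq, erase_inter,
      erase_eq_of_notMem fun h => hip (mem_inter.mp h).2]

theorem pointTerm_erase {s : Finset (Fin m)} {i : Fin m} {p : Fin n → ℂ}
    (hip : i ∉ XpFinset a μ p) :
    pointTerm a μ (s.erase i) p =
      algebraMap ℂ _ (∏ j ∈ (s \ XpFinset a μ p).erase i, (a j ⬝ᵥ p + μ j)⁻¹) *
        ∏ j ∈ s ∩ XpFinset a μ p, (affForm a μ j)⁻¹ := by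
  rw [pointTerm, erase_sdiff_comm, erase_inter, erase_eq_of_notMem fun h => hip (mem_inter.mp h).2]

theorem sum_sdiff_XpFinset_mul_eq_one {s : Finset (Fin m)} {c : Fin m → ℂ}
    (hrel : ∑ i ∈ s, c i • a i = 0) (hμ : ∑ i ∈ s, c i * μ i = 1) (p : Fin n → ℂ) :
    ∑ i ∈ s \ XpFinset a μ p, c i * (a i ⬝ᵥ p + μ i) = 1 := by
  rw [sum_subset sdiff_subset fun i _ hi => ?_]
  · calc ∑ i ∈ s, c i * (a i ⬝ᵥ p + μ i)
          = (∑ i ∈ s, c i • a i) ⬝ᵥ p + ∑ i ∈ s, c i * μ i := by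
            simp only [mul_add, sum_add_distrib, sum_dotProduct, smul_dotProduct, smul_eq_mul]
      _ = 1 := by rw [hrel, hμ, zero_dotProduct, zero_add]
  · rw [mem_sdiff, not_and_not_right] at hi
    rw [mem_XpFinset.mp (hi ‹_›), mul_zero]

theorem prod_inv_affForm_eq_sum_smul_prod_erase {s : Finset (Fin m)} (ha : ∀ i ∈ s, a i ≠ 0)
    {c : Fin m → ℂ} (hrel : ∑ i ∈ s, c i • a i = 0) (hμ : ∑ i ∈ s, c i * μ i = 1) :
    ∏ i ∈ s, (affForm a μ i)⁻¹ = ∑ i ∈ s, c i • ∏ j ∈ s.erase i, (affForm a μ j)⁻¹ := by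
  simp_rw [Algebra.smul_def]
  exact prod_inv_eq_sum_mul_prod_erase_inv s (fun i hi => affForm_ne_zero μ (ha i hi))
    (sum_mul_affForm_eq_one hrel hμ)

theorem sum_smul_pointTerm_erase {s : Finset (Fin m)} {c : Fin m → ℂ}
    (hrel : ∑ i ∈ s, c i • a i = 0) (hμ : ∑ i ∈ s, c i * μ i = 1) (p : Fin n → ℂ) :
    ∑ i ∈ s \ XpFinset a μ p, c i • pointTerm a μ (s.erase i) p = pointTerm a μ s p := by
  have he : ∀ i ∈ s \ XpFinset a μ p, a i ⬝ᵥ p + μ i ≠ 0 := fun i hi h =>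
    (mem_sdiff.mp hi).2 (mem_XpFinset.mpr h)
  rw [pointTerm, prod_inv_eq_sum_mul_prod_erase_inv _ he (sum_sdiff_XpFinset_mul_eq_one hrel hμ p),
    map_sum, sum_mul]
  refine sum_congr rfl fun i hi => ?_
  rw [pointTerm_erase (mem_sdiff.mp hi).2, Algebra.smul_def, map_mul, mul_assoc]

theorem prod_inv_affForm_eq_finsum_pointTerm (s : Finset (Fin m)) (ha : ∀ i ∈ s, a i ≠ 0)
    (hs : Submodule.span ℂ (a '' s) = ⊤) (hgen : IsGenericOn a μ s) :
    ∏ i ∈ s, (affForm a μ i)⁻¹ = ∑ᶠ p ∈ armPointsOn a μ s, pointTerm a μ s p := by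
  induction s using Finset.strongInduction with
  | H s ih =>
  rcases exists_common_zero_or_exists_relation s a μ with ⟨p, hp⟩ | ⟨c, hrel, hμ⟩
  · have hsub : s ⊆ XpFinset a μ p := fun i hi => mem_XpFinset.mpr (hp i hi)
    rw [armPointsOn_eq_singleton hs hp, finsum_mem_singleton, pointTerm,
      sdiff_eq_empty_iff_subset.mpr hsub, inter_eq_left.mpr hsub, prod_empty, map_one, one_mul]
  set P := (armPointsOn_finite (a := a) (μ := μ) s).toFinset
  have herase : ∀ i ∈ s, c i • ∏ j ∈ s.erase i, (affForm a μ j)⁻¹ =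
      c i • ∑ p ∈ P with i ∉ XpFinset a μ p, pointTerm a μ (s.erase i) p := by
    intro i hi
    rcases eq_or_ne (c i) 0 with hci | hci
    · simp [hci]
    have hs' : Submodule.span ℂ (a '' ↑(s.erase i)) = ⊤ :=
      (span_image_erase_eq_of_sum_smul_eq_zero hrel hi hci).trans hs
    rw [ih _ (erase_ssubset hi) (fun j hj => ha j (mem_of_mem_erase hj)) hs'
      (hgen.mono (erase_subset i s)), ← finsum_mem_coe_finset]
    congr 2
    ext p
    simp [P, mem_armPointsOn_erase hgen hi]
  calc ∏ i ∈ s, (affForm a μ i)⁻¹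
      = ∑ i ∈ s, c i • ∏ j ∈ s.erase i, (affForm a μ j)⁻¹ :=
        prod_inv_affForm_eq_sum_smul_prod_erase ha hrel hμ
    _ = ∑ i ∈ s, ∑ p ∈ P with i ∉ XpFinset a μ p, c i • pointTerm a μ (s.erase i) p := by
        simp_rw [sum_congr rfl herase, smul_sum]
    _ = ∑ p ∈ P, ∑ i ∈ s \ XpFinset a μ p, c i • pointTerm a μ (s.erase i) p :=
        sum_comm' fun i p => by simp only [mem_filter, mem_sdiff]; tauto
    _ = ∑ p ∈ P, pointTerm a μ s p := sum_congr rfl fun p _ => sum_smul_pointTerm_erase hrel hμ p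
    _ = ∑ᶠ p ∈ armPointsOn a μ s, pointTerm a μ s p := (finsum_mem_eq_finite_toFinset_sum _ _).symm

end Arrangement

/-- Original Formula 8.5, valid in the generic case: if for every point `p` of the
arrangement the vectors `{a i : i ∈ X_p}` are linearly independent (hence a basis of
`ℂ^n`), then in `K = ℂ(x_1, …, x_n)` one has
`∏ i, 1/(a i + μ i)
  = ∑_{p ∈ P(X,μ)} (∏_{i ∉ X_p} 1/(⟨a i | p⟩ + μ i)) ∏_{i ∈ X_p} 1/(a i + μ i)`. -/
theorem generic_formula_8_5 {n m : ℕ} (a : Fin m → (Fin n → ℂ)) (μ : Fin m → ℂ)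
    (ha : ∀ i, a i ≠ 0)
    (hspan : Submodule.span ℂ (Set.range a) = ⊤)
    (hgen : ∀ p ∈ armPoints a μ, LinearIndependent ℂ (fun i : Xp a μ p => a i)) :
    ∏ i, (affForm a μ i)⁻¹ =
      ∑ᶠ p ∈ armPoints a μ,
        algebraMap (MvPolynomial (Fin n) ℂ) (FractionRing (MvPolynomial (Fin n) ℂ))
            (C (∏ i ∈ (XpFinset a μ p)ᶜ, ((∑ j, a i j * p j) + μ i)⁻¹)) *
          ∏ i ∈ XpFinset a μ p, (affForm a μ i)⁻¹ := by
  rw [prod_inv_affForm_eq_finsum_pointTerm univ (fun i _ => ha i) (by simpa using hspan)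
    (isGenericOn_univ_iff.mpr hgen), armPointsOn_univ]
  refine finsum_mem_congr rfl fun p _ => ?_
  rw [pointTerm, univ_inter, ← compl_eq_univ_sdiff,
    IsScalarTower.algebraMap_apply ℂ (MvPolynomial (Fin n) ℂ), algebraMap_eq]
  rfl
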